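/- Let d ≥ 2 be an integer, 1 < α < 2, ε > 0 with 1 + ε < d + α, and 0 < s < (α−1)/(1+ε). Define b : ℝ^{d+1} → [0,∞] by b(t,x) := 1_{{|t| ≤ 1, |x| ≤ 1}} · |x₁|^{−s} for x₁ ≠ 0 (any value on the hyperplane x₁ = 0), where x = (x₁,…,x_d). Then ‖b^{1/(α−1)}‖_{E_{1+ε}} < ∞. -/

import Mathlib

open MeasureTheory ENNReal Set Filter

noncomputable section

/-- The spatial space `ℝ^d`. -/
abbrev Spc (d : ℕ) := EuclideanSpace ℝ (Fin d)

/-- Parabolic cylinder `C_ρ(t,x) = {(s,y) : t ≤ s ≤ t + ρ^α, |y - x| ≤ ρ}`. -/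
def cylP (d : ℕ) (α ρ t : ℝ) (x : Spc d) : Set (ℝ × Spc d) :=
  {p | t ≤ p.1 ∧ p.1 ≤ t + ρ ^ α ∧ dist p.2 x ≤ ρ}

/-- Average of `f` over the parabolic cylinder `C_ρ(t,x)`. -/
def cylAvg (d : ℕ) (α ρ t : ℝ) (x : Spc d) (f : ℝ × Spc d → ℝ≥0∞) : ℝ≥0∞ :=
  (volume (cylP d α ρ t x))⁻¹ * ∫⁻ p in cylP d α ρ t x, f p

/-- Parabolic Morrey norm `‖v‖_{E_q}`. -/
def morreyE (d : ℕ) (α q : ℝ) (v : ℝ × Spc d → ℝ≥0∞) : ℝ≥0∞ :=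
  ⨆ (ρ : ℝ) (_ : 0 < ρ) (t : ℝ) (x : Spc d),
    ENNReal.ofReal ρ * (cylAvg d α ρ t x (fun p => v p ^ q)) ^ (1 / q)

/-- Elliptic Morrey norm `‖w‖_{M_q}` on `ℝ^d`. -/
def morreyM (d : ℕ) (q : ℝ) (w : Spc d → ℝ≥0∞) : ℝ≥0∞ :=
  ⨆ (ρ : ℝ) (_ : 0 < ρ) (x : Spc d),
    ENNReal.ofReal ρ *
      ((volume (Metric.closedBall x ρ))⁻¹ *
        ∫⁻ y in Metric.closedBall x ρ, w y ^ q) ^ (1 / q)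

/-- Fractional (parabolic) maximal function `M_β f(t,x)`. -/
def maxFun (d : ℕ) (α β : ℝ) (f : ℝ × Spc d → ℝ≥0∞) (t : ℝ) (x : Spc d) : ℝ≥0∞ :=
  ⨆ (ρ : ℝ) (_ : 0 < ρ), ENNReal.ofReal (ρ ^ β) * cylAvg d α ρ t x f

/-- Uncentered parabolic maximal function `M̂ f(z)`, sup over all parabolic
cylinders containing `z`. -/
def hatM (d : ℕ) (α : ℝ) (f : ℝ × Spc d → ℝ≥0∞) (z : ℝ × Spc d) : ℝ≥0∞ :=
  ⨆ (ρ : ℝ) (_ : 0 < ρ) (t : ℝ) (x : Spc d) (_ : z ∈ cylP d α ρ t x),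
    cylAvg d α ρ t x f

/-- The kernel `p_γ(s,y) = 1_{s>0} s^{γ/2} min(|y|^{-d-α}, s^{-(d+α)/α})`. -/
def pKer (d : ℕ) (α γ : ℝ) (s : ℝ) (y : Spc d) : ℝ≥0∞ :=
  if 0 < s then
    (if s ^ (1 / α) ≤ ‖y‖ then ENNReal.ofReal (s ^ (γ / 2) * ‖y‖ ^ (-(d : ℝ) - α))
     else ENNReal.ofReal (s ^ (γ / 2 - ((d : ℝ) + α) / α)))
  else 0

/-- `P_γ f(t,x) = ∫ p_γ(s,y) f(t+s, x+y) dy ds`. -/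
def Pop (d : ℕ) (α γ : ℝ) (f : ℝ × Spc d → ℝ≥0∞) (t : ℝ) (x : Spc d) : ℝ≥0∞ :=
  ∫⁻ p : ℝ × Spc d, pKer d α γ p.1 p.2 * f (t + p.1, x + p.2)

/-- `P*_γ f(t,x) = ∫ p_γ(s,y) f(t-s, x+y) dy ds`. -/
def PopStar (d : ℕ) (α γ : ℝ) (f : ℝ × Spc d → ℝ≥0∞) (t : ℝ) (x : Spc d) : ℝ≥0∞ :=
  ∫⁻ p : ℝ × Spc d, pKer d α γ p.1 p.2 * f (t - p.1, x + p.2)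


/-! Raised to the power `1 + ε`, the integrand is `1_{|t| ≤ 1} 1_{|x| ≤ 1} |x₁|^{-σ}` with
`σ = s (1 + ε) / (α - 1) < 1`, so it is integrable in `x₁`. Integrating out the remaining
`d - 1` coordinates over a box, its integral over `C_ρ(t,x)` is at most
`min(ρ^α, 2) · min(2ρ, 2)^{d-1} · ∫_{-1}^{1} |u|^{-σ} du`. Against `|C_ρ| ≍ ρ^{α+d}` this gives
`ρ^{1+ε} ⨍_{C_ρ} ≲ ρ^ε` for `ρ ≤ 1` and `≲ ρ^{1+ε-α-d}` for `ρ ≥ 1`, both bounded because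
`1 + ε < d + α`. -/

def powerSingularity (σ : ℝ) : ℝ → ℝ≥0∞ :=
  (Icc (-1) 1).indicator fun u => ENNReal.ofReal (|u| ^ (-σ))

def cutoffProfile {d : ℕ} (g : ℝ → ℝ≥0∞) (i : Fin d) (z : ℝ × Spc d) : ℝ≥0∞ :=
  (Icc (-1 : ℝ) 1).indicator 1 z.1 *
    (Metric.closedBall (0 : Spc d) 1).indicator (fun y => g (y i)) z.2

lemma measurable_powerSingularity (σ : ℝ) : Measurable (powerSingularity σ) :=
  (measurable_abs.pow_const _).ennreal_ofReal.indicator measurableSet_Icc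

lemma lintegral_powerSingularity_ne_top {σ : ℝ} (hσ : σ < 1) :
    ∫⁻ u, powerSingularity σ u ≠ ⊤ := by
  have hloc : LocallyIntegrable (fun u : ℝ => |u| ^ (-σ)) volume :=
    locallyIntegrable_of_norm_le_rpow (C := 1) (by simp) (by simpa using hσ)
      (Eventually.of_forall fun u => by simp [abs_nonneg, Real.abs_rpow_of_nonneg])
      (measurable_abs.pow_const _).aestronglyMeasurable
  rw [powerSingularity, lintegral_indicator measurableSet_Icc]
  exact (hloc.integrableOn_isCompact isCompact_Icc).lintegral_lt_top.ne

lemma ite_rpow_rpow_le_cutoffProfile {n : ℕ} {s p q : ℝ} (hp : 0 < p) (hq : 0 < q)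
    (i : Fin (n + 1)) (t : ℝ) (x : Spc (n + 1)) :
    ((if |t| ≤ 1 ∧ ‖x‖ ≤ 1 then ENNReal.ofReal (|x i| ^ (-s)) else 0) ^ p) ^ q ≤
      cutoffProfile (powerSingularity (s * p * q)) i (t, x) := by
  split_ifs with h
  · have hxi : x i ∈ Icc (-1) 1 := mem_Icc.mpr (abs_le.mp ((PiLp.norm_apply_le x i).trans h.2))
    rw [cutoffProfile, indicator_of_mem (mem_Icc.mpr (abs_le.mp h.1)),
      indicator_of_mem (mem_closedBall_zero_iff.mpr h.2), Pi.one_apply, one_mul, powerSingularity,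
      indicator_of_mem hxi, ← ENNReal.rpow_mul,
      ENNReal.ofReal_rpow_of_nonneg (by positivity) (by positivity), ← Real.rpow_mul (abs_nonneg _),
      neg_mul, mul_assoc]
  · rw [ENNReal.zero_rpow_of_pos hp, ENNReal.zero_rpow_of_pos hq]
    exact zero_le

lemma setLIntegral_closedBall_comp_apply_le {n : ℕ} {g : ℝ → ℝ≥0∞} (hg : Measurable g)
    (i : Fin (n + 1)) (x : Spc (n + 1)) (r : ℝ) :
    ∫⁻ y in Metric.closedBall x r, g (y i) ≤ (∫⁻ u, g u) * ENNReal.ofReal (2 * r) ^ n := by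
  let e := (MeasurableEquiv.toLp 2 (Fin (n + 1) → ℝ)).symm.trans
    (MeasurableEquiv.piFinSuccAbove (fun _ => ℝ) i)
  have he : MeasurePreserving e volume (volume.prod volume) :=
    (EuclideanSpace.volume_preserving_symm_measurableEquiv_toLp _).trans
      (by simpa only [volume_pi] using
        measurePreserving_piFinSuccAbove (fun _ => (volume : Measure ℝ)) i)
  let box : Set (Fin n → ℝ) :=
    univ.pi fun j => Icc (x (i.succAbove j) - r) (x (i.succAbove j) + r)
  have hsub : Metric.closedBall x r ⊆ e ⁻¹' (univ ×ˢ box) := by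
    intro y hy
    simp only [mem_preimage, mem_prod, mem_univ, true_and, box, mem_univ_pi, mem_Icc]
    intro j
    change x _ - r ≤ y (i.succAbove j) ∧ y (i.succAbove j) ≤ x _ + r
    have := (PiLp.dist_apply_le y x (i.succAbove j)).trans (Metric.mem_closedBall.mp hy)
    rw [Real.dist_eq, abs_le] at this
    exact ⟨by linarith, by linarith⟩
  calc ∫⁻ y in Metric.closedBall x r, g (y i)
      ≤ ∫⁻ y in e ⁻¹' (univ ×ˢ box), g (e y).1 := lintegral_mono_set hsub
    _ = ∫⁻ p in univ ×ˢ box, g p.1 ∂(volume.prod volume) :=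
      he.setLIntegral_comp_preimage_emb e.measurableEmbedding (fun p => g p.1) _
    _ = (∫⁻ u, g u) * volume box := by
      rw [← Measure.prod_restrict, Measure.restrict_univ]
      simpa using lintegral_prod_mul (μ := volume) (ν := volume.restrict box)
        hg.aemeasurable (aemeasurable_const (b := (1 : ℝ≥0∞)))
    _ = (∫⁻ u, g u) * ENNReal.ofReal (2 * r) ^ n := by
      simp only [box, volume_pi_pi, Real.volume_Icc]
      ring_nf
      simp

lemma cylP_eq_prod (d : ℕ) (α ρ t : ℝ) (x : Spc d) :
    cylP d α ρ t x = Icc t (t + ρ ^ α) ×ˢ Metric.closedBall x ρ := by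
  ext z
  simp [cylP, and_assoc, Metric.mem_closedBall]

lemma volume_cylP (d : ℕ) (α : ℝ) {ρ : ℝ} (hρ : 0 < ρ) (t : ℝ) (x : Spc d) :
    volume (cylP d α ρ t x) =
      ENNReal.ofReal (ρ ^ α * ρ ^ d) * volume (Metric.ball (0 : Spc d) 1) := by
  rw [cylP_eq_prod, Measure.volume_eq_prod, Measure.prod_prod, Real.volume_Icc,
    Measure.addHaar_closedBall _ _ hρ.le, finrank_euclideanSpace_fin, add_sub_cancel_left,
    ← mul_assoc, ENNReal.ofReal_mul (by positivity)]

lemma morreyE_lt_top_of_forall_le {d : ℕ} {α q : ℝ} (hq : 0 < q) {v : ℝ × Spc d → ℝ≥0∞}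
    {C : ℝ≥0∞} (hC : C ≠ ⊤)
    (h : ∀ ρ > 0, ∀ t x, ENNReal.ofReal ρ ^ q * cylAvg d α ρ t x (fun p => v p ^ q) ≤ C) :
    morreyE d α q v < ⊤ := by
  refine lt_of_le_of_lt ?_ (ENNReal.rpow_lt_top_of_nonneg (one_div_nonneg.mpr hq.le) hC)
  refine iSup₂_le fun ρ hρ => iSup₂_le fun t x => ?_
  calc ENNReal.ofReal ρ * cylAvg d α ρ t x (fun p => v p ^ q) ^ (1 / q)
      = (ENNReal.ofReal ρ ^ q * cylAvg d α ρ t x (fun p => v p ^ q)) ^ (1 / q) := by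
        rw [ENNReal.mul_rpow_of_nonneg _ _ (one_div_nonneg.mpr hq.le), ← ENNReal.rpow_mul,
          mul_one_div_cancel hq.ne', ENNReal.rpow_one]
    _ ≤ C ^ (1 / q) := ENNReal.rpow_le_rpow (h ρ hρ t x) (one_div_nonneg.mpr hq.le)

lemma ae_apply_snd_ne_zero {d : ℕ} (i : Fin d) : ∀ᵐ z : ℝ × Spc d, z.2 i ≠ 0 := by
  let L : ℝ × Spc d →ₗ[ℝ] ℝ := (EuclideanSpace.proj i).toLinearMap ∘ₗ LinearMap.snd ℝ ℝ (Spc d)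
  have hL : LinearMap.ker L ≠ ⊤ := by
    rw [Ne, LinearMap.ker_eq_top]
    intro h
    simpa [L] using LinearMap.congr_fun h (0, EuclideanSpace.single i 1)
  rw [ae_iff, Measure.volume_eq_prod]
  convert Measure.addHaar_submodule (volume.prod volume) _ hL using 2
  ext z
  simp [L]

lemma rpow_mul_min_le {n : ℕ} {α q ρ : ℝ} (hρ : 0 < ρ) (hq1 : 1 ≤ q) (hq : q ≤ α + (n + 1)) :
    ρ ^ q * (min (ρ ^ α) 2 * min (2 * ρ) 2 ^ n) ≤ 2 ^ (n + 1) * (ρ ^ α * ρ ^ (n + 1)) := by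
  have hρα : 0 < ρ ^ α := Real.rpow_pos_of_pos hρ α
  rcases le_total ρ 1 with hρ1 | hρ1
  · have hρq : ρ ^ q ≤ ρ := by
      simpa using Real.rpow_le_rpow_of_exponent_ge hρ hρ1 hq1
    calc ρ ^ q * (min (ρ ^ α) 2 * min (2 * ρ) 2 ^ n) ≤ ρ * (ρ ^ α * (2 * ρ) ^ n) := by
          gcongr
          · exact min_le_left _ _
          · exact min_le_left _ _
      _ ≤ 2 ^ (n + 1) * (ρ ^ α * ρ ^ (n + 1)) := by
          rw [mul_pow, pow_succ, pow_succ]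
          have : 0 ≤ ρ ^ α * 2 ^ n * ρ ^ n * ρ := by positivity
          nlinarith
  · have hρq : ρ ^ q ≤ ρ ^ α * ρ ^ (n + 1) := by
      rw [← Real.rpow_natCast, ← Real.rpow_add hρ]
      exact Real.rpow_le_rpow_of_exponent_le hρ1 (by push_cast; linarith)
    calc ρ ^ q * (min (ρ ^ α) 2 * min (2 * ρ) 2 ^ n) ≤ (ρ ^ α * ρ ^ (n + 1)) * (2 * 2 ^ n) := by
          gcongr
          · exact min_le_right _ _
          · exact min_le_right _ _
      _ = 2 ^ (n + 1) * (ρ ^ α * ρ ^ (n + 1)) := by ring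

lemma setLIntegral_Icc_indicator_Icc_le (a b : ℝ) :
    ∫⁻ u in Icc a b, (Icc (-1 : ℝ) 1).indicator 1 u ≤ ENNReal.ofReal (min (b - a) 2) := by
  rw [lintegral_indicator_one measurableSet_Icc, Measure.restrict_apply measurableSet_Icc,
    ENNReal.ofReal_min]
  refine le_min ((measure_mono inter_subset_right).trans_eq (Real.volume_Icc))
    ((measure_mono inter_subset_left).trans_eq ?_)
  rw [Real.volume_Icc]
  norm_num

lemma setLIntegral_closedBall_indicator_comp_apply_le {n : ℕ} {g : ℝ → ℝ≥0∞}
    (hg : Measurable g) (i : Fin (n + 1)) (x : Spc (n + 1)) {r : ℝ} (hr : 0 ≤ r) :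
    ∫⁻ y in Metric.closedBall x r, (Metric.closedBall 0 1).indicator (fun y => g (y i)) y ≤
      ENNReal.ofReal (min (2 * r) 2 ^ n) * ∫⁻ u, g u := by
  rw [mul_comm]
  rcases le_total r 1 with hr1 | hr1
  · rw [min_eq_left (by linarith), ENNReal.ofReal_pow (by linarith)]
    exact (lintegral_mono fun y => indicator_le_self _ _ y).trans
      (setLIntegral_closedBall_comp_apply_le hg i x r)
  · rw [min_eq_right (by linarith), ENNReal.ofReal_pow (by norm_num), ← mul_one (2 : ℝ)]
    calc ∫⁻ y in Metric.closedBall x r, (Metric.closedBall 0 1).indicator (fun y => g (y i)) y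
        ≤ ∫⁻ y, (Metric.closedBall (0 : Spc (n + 1)) 1).indicator (fun y => g (y i)) y :=
          setLIntegral_le_lintegral _ _
      _ = ∫⁻ y in Metric.closedBall (0 : Spc (n + 1)) 1, g (y i) :=
          lintegral_indicator Metric.isClosed_closedBall.measurableSet _
      _ ≤ _ := setLIntegral_closedBall_comp_apply_le hg i 0 1

section CylinderEstimate

variable {n : ℕ} {α : ℝ} {g : ℝ → ℝ≥0∞} {i : Fin (n + 1)} {f : ℝ × Spc (n + 1) → ℝ≥0∞}

lemma setLIntegral_cylP_le (hg : Measurable g)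
    (hf : ∀ᵐ z, f z ≤ cutoffProfile g i z)
    {ρ : ℝ} (hρ : 0 < ρ) (t : ℝ) (x : Spc (n + 1)) :
    ∫⁻ z in cylP (n + 1) α ρ t x, f z ≤
      ENNReal.ofReal (min (ρ ^ α) 2 * min (2 * ρ) 2 ^ n) * ∫⁻ u, g u := by
  rw [cylP_eq_prod]
  calc ∫⁻ z in Icc t (t + ρ ^ α) ×ˢ Metric.closedBall x ρ, f z
      ≤ ∫⁻ z in Icc t (t + ρ ^ α) ×ˢ Metric.closedBall x ρ, cutoffProfile g i z :=
        lintegral_mono_ae (ae_restrict_of_ae hf)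
    _ = (∫⁻ u in Icc t (t + ρ ^ α), (Icc (-1 : ℝ) 1).indicator 1 u) *
          ∫⁻ y in Metric.closedBall x ρ,
            (Metric.closedBall 0 1).indicator (fun y => g (y i)) y := by
        rw [Measure.volume_eq_prod, ← Measure.prod_restrict]
        have hgi : Measurable fun y : Spc (n + 1) => g (y i) :=
          hg.comp ((measurable_pi_apply i).comp (MeasurableEquiv.toLp 2 _).symm.measurable)
        exact lintegral_prod_mul (measurable_one.indicator measurableSet_Icc).aemeasurable
          (hgi.indicator Metric.isClosed_closedBall.measurableSet).aemeasurable
    _ ≤ ENNReal.ofReal (min (ρ ^ α) 2) * (ENNReal.ofReal (min (2 * ρ) 2 ^ n) * ∫⁻ u, g u) := by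
        gcongr
        · simpa using setLIntegral_Icc_indicator_Icc_le t (t + ρ ^ α)
        · exact setLIntegral_closedBall_indicator_comp_apply_le hg i x hρ.le
    _ = ENNReal.ofReal (min (ρ ^ α) 2 * min (2 * ρ) 2 ^ n) * ∫⁻ u, g u := by
        rw [ENNReal.ofReal_mul (by positivity), mul_assoc]

lemma ofReal_rpow_mul_cylAvg_le {q : ℝ} (hq1 : 1 ≤ q) (hq : q ≤ α + (n + 1))
    (hg : Measurable g)
    (hf : ∀ᵐ z, f z ≤ cutoffProfile g i z)
    {ρ : ℝ} (hρ : 0 < ρ) (t : ℝ) (x : Spc (n + 1)) :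
    ENNReal.ofReal ρ ^ q * cylAvg (n + 1) α ρ t x f ≤
      ENNReal.ofReal (2 ^ (n + 1)) *
        ((∫⁻ u, g u) / volume (Metric.ball (0 : Spc (n + 1)) 1)) := by
  set V := volume (Metric.ball (0 : Spc (n + 1)) 1)
  have hV : V ≠ 0 := (Metric.measure_ball_pos volume _ one_pos).ne'
  have hD : 0 < ρ ^ α * ρ ^ (n + 1) := by positivity
  have hI := setLIntegral_cylP_le (α := α) hg hf hρ t x
  have hm := rpow_mul_min_le (α := α) hρ hq1 hq
  have hm0 : 0 ≤ min (ρ ^ α) 2 * min (2 * ρ) 2 ^ n := by positivity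
  generalize min (ρ ^ α) 2 * min (2 * ρ) 2 ^ n = m at hI hm hm0
  rw [cylAvg, volume_cylP _ _ hρ, ENNReal.ofReal_rpow_of_pos hρ]
  calc ENNReal.ofReal (ρ ^ q) * ((ENNReal.ofReal (ρ ^ α * ρ ^ (n + 1)) * V)⁻¹ *
        ∫⁻ z in cylP (n + 1) α ρ t x, f z)
      ≤ ENNReal.ofReal (ρ ^ q) * ((ENNReal.ofReal (ρ ^ α * ρ ^ (n + 1)) * V)⁻¹ *
        (ENNReal.ofReal m * ∫⁻ u, g u)) := by
        gcongr
    _ = ENNReal.ofReal (ρ ^ q * m / (ρ ^ α * ρ ^ (n + 1))) * ((∫⁻ u, g u) / V) := by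
        rw [ENNReal.mul_inv (Or.inl (ENNReal.ofReal_pos.mpr hD).ne') (Or.inl ENNReal.ofReal_ne_top),
          ← ENNReal.ofReal_inv_of_pos hD, div_eq_mul_inv,
          ENNReal.ofReal_mul (p := ρ ^ q * m) (by positivity),
          ENNReal.ofReal_mul (p := ρ ^ q) (by positivity), ENNReal.div_eq_inv_mul]
        ring
    _ ≤ ENNReal.ofReal (2 ^ (n + 1)) * ((∫⁻ u, g u) / V) := by
        gcongr
        rwa [div_le_iff₀ hD]

end CylinderEstimate

/-- Example (E.3): the drift with hypersurface singularity
`b(t,x) = 1_{|t| ≤ 1, |x| ≤ 1} |x₁|^{-s}` (any value on `{x₁ = 0}`),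
`0 < s < (α-1)/(1+ε)`, satisfies `‖b^{1/(α-1)}‖_{E_{1+ε}} < ∞`. -/
theorem stmt_16 (d : ℕ) (hd : 2 ≤ d) (α ε s : ℝ) (hα1 : 1 < α)
    (hε : 0 < ε) (hεd : 1 + ε < d + α) (hs2 : s < (α - 1) / (1 + ε))
    (b : ℝ × Spc d → ℝ≥0∞)
    (hb : ∀ (t : ℝ) (x : Spc d), x ⟨0, by omega⟩ ≠ 0 →
      b (t, x) =
        (if |t| ≤ 1 ∧ ‖x‖ ≤ 1 then ENNReal.ofReal (|x ⟨0, by omega⟩| ^ (-s)) else 0)) :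
    morreyE d α (1 + ε) (fun z => b z ^ (1 / (α - 1))) < ⊤ := by
  obtain ⟨n, rfl⟩ : ∃ n, d = n + 1 := ⟨d - 1, by omega⟩
  have hp : 0 < 1 / (α - 1) := one_div_pos.mpr (by linarith)
  have hσ : s * (1 / (α - 1)) * (1 + ε) < 1 := by
    rwa [mul_one_div, div_mul_eq_mul_div, div_lt_one (by linarith), ← lt_div_iff₀ (by linarith)]
  have hprofile : ∀ᵐ z : ℝ × Spc (n + 1), (b z ^ (1 / (α - 1))) ^ (1 + ε) ≤
      cutoffProfile (powerSingularity (s * (1 / (α - 1)) * (1 + ε))) 0 z := by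
    filter_upwards [ae_apply_snd_ne_zero 0] with ⟨t, x⟩ hx
    rw [hb t x hx, Fin.zero_eta]
    exact ite_rpow_rpow_le_cutoffProfile hp (by linarith) 0 t x
  have hV : volume (Metric.ball (0 : Spc (n + 1)) 1) ≠ 0 :=
    (Metric.measure_ball_pos volume _ one_pos).ne'
  exact morreyE_lt_top_of_forall_le (by linarith)
    (ENNReal.mul_ne_top ENNReal.ofReal_ne_top
      (ENNReal.div_ne_top (lintegral_powerSingularity_ne_top hσ) hV))
    fun ρ hρ t x => ofReal_rpow_mul_cylAvg_le (by linarith) (by push_cast at hεd; linarith)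
      (measurable_powerSingularity _) hprofile hρ t x
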